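/- Let h: [0,∞) → [0,∞) be of class C² with h(0) = h'(0) = 0 and suppose there are constants c₁, c₂ > 0 and an exponent μ ∈ (1,∞) such that c₁(1+t)^{−μ} ≤ h''(t) and h'(t) ≤ c₂·t/(1+t) for all t ≥ 0. Then for all t ≥ 0: c₁·2^{−μ}·(t − 1) ≤ h(t) ≤ c₂·t. -/

import Mathlib

noncomputable section

open MeasureTheory Real Filter

/-- Partial derivative ∂ₖu(x) ∈ ℝⁿ of a vector field u : ℝⁿ → ℝⁿ. -/
def pd {n : ℕ} (u : EuclideanSpace ℝ (Fin n) → EuclideanSpace ℝ (Fin n))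
    (k : Fin n) (x : EuclideanSpace ℝ (Fin n)) : EuclideanSpace ℝ (Fin n) :=
  fderiv ℝ u x (EuclideanSpace.single k 1)

/-- Divergence of u at x. -/
def divg {n : ℕ} (u : EuclideanSpace ℝ (Fin n) → EuclideanSpace ℝ (Fin n))
    (x : EuclideanSpace ℝ (Fin n)) : ℝ :=
  ∑ k, pd u k x k

/-- Symmetric gradient ε(u)(x) = (1/2)(∇u + (∇u)ᵀ), entry (i,j) = (∂ⱼuⁱ + ∂ᵢuʲ)/2. -/
def symGrad {n : ℕ} (u : EuclideanSpace ℝ (Fin n) → EuclideanSpace ℝ (Fin n))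
    (x : EuclideanSpace ℝ (Fin n)) : Matrix (Fin n) (Fin n) ℝ :=
  fun i j => (pd u j x i + pd u i x j) / 2

/-- Full gradient ∇u(x), entry (i,j) = ∂ⱼuⁱ. -/
def gradM {n : ℕ} (u : EuclideanSpace ℝ (Fin n) → EuclideanSpace ℝ (Fin n))
    (x : EuclideanSpace ℝ (Fin n)) : Matrix (Fin n) (Fin n) ℝ :=
  fun i j => pd u j x i

/-- Frobenius inner product A : B. -/
def frob {n : ℕ} (A B : Matrix (Fin n) (Fin n) ℝ) : ℝ := ∑ i, ∑ j, A i j * B i j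

/-- Frobenius norm |A|. -/
def fnorm {n : ℕ} (A : Matrix (Fin n) (Fin n) ℝ) : ℝ := Real.sqrt (frob A A)

/-- DH(ε) = (h'(|ε|)/|ε|) ε, interpreted as 0 at ε = 0. -/
def DH {n : ℕ} (h : ℝ → ℝ) (A : Matrix (Fin n) (Fin n) ℝ) : Matrix (Fin n) (Fin n) ℝ :=
  if fnorm A = 0 then 0 else (deriv h (fnorm A) / fnorm A) • A

/-- u is a weak solution of -div DH(ε(u)) + (u·∇)u + ∇π = 0, div u = 0:
for all smooth compactly supported divergence-free φ,
∫ DH(ε(u)) : ε(φ) dx + ∫ uᵏ ∂ₖuⁱ φⁱ dx = 0. -/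
def IsWeakSolution {n : ℕ} (h : ℝ → ℝ)
    (u : EuclideanSpace ℝ (Fin n) → EuclideanSpace ℝ (Fin n)) : Prop :=
  ∀ φ : EuclideanSpace ℝ (Fin n) → EuclideanSpace ℝ (Fin n),
    ContDiff ℝ (⊤ : ℕ∞) φ → HasCompactSupport φ → (∀ x, divg φ x = 0) →
    (∫ x, frob (DH h (symGrad u x)) (symGrad φ x)) +
      (∫ x, ∑ k, ∑ i, u x k * pd u k x i * φ x i) = 0

/-- u is a weak solution of the Stokes-type system -div DH(ε(u)) + ∇π = 0, div u = 0:
for all smooth compactly supported divergence-free φ, ∫ DH(ε(u)) : ε(φ) dx = 0. -/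
def IsStokesWeakSolution {n : ℕ} (h : ℝ → ℝ)
    (u : EuclideanSpace ℝ (Fin n) → EuclideanSpace ℝ (Fin n)) : Prop :=
  ∀ φ : EuclideanSpace ℝ (Fin n) → EuclideanSpace ℝ (Fin n),
    ContDiff ℝ (⊤ : ℕ∞) φ → HasCompactSupport φ → (∀ x, divg φ x = 0) →
    (∫ x, frob (DH h (symGrad u x)) (symGrad φ x)) = 0

/-- The open square Q_R(x₀) ⊂ ℝ². -/
def sqr (R : ℝ) (x₀ : EuclideanSpace ℝ (Fin 2)) : Set (EuclideanSpace ℝ (Fin 2)) :=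
  {x | |x 0 - x₀ 0| < R ∧ |x 1 - x₀ 1| < R}

/-- h'(t)/t, extended by h''(0) at t = 0. -/
def slopeH (h : ℝ → ℝ) (t : ℝ) : ℝ :=
  if t = 0 then deriv (deriv h) 0 else deriv h t / t

/-! Since `h' ≤ c₂`, integrating from `0` gives `h t ≤ c₂ t`. For the lower bound, on `[0, 1]`
the ellipticity gives `h'' ≥ c₁ 2^{-μ}`, so `h' 1 ≥ c₁ 2^{-μ}`; as `h'' ≥ 0`, `h'` is nondecreasing
and stays above `c₁ 2^{-μ}` on `[1, ∞)`. Integrating from `1` and using `h 1 ≥ 0` yields the bound,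
which is trivial on `[0, 1]` where its left side is nonpositive. -/

section LinearGrowth

variable {f : ℝ → ℝ}

theorem le_mul_of_deriv_le (hf : Differentiable ℝ f) (hf0 : f 0 = 0) {C : ℝ}
    (hf' : ∀ t, 0 ≤ t → deriv f t ≤ C) {t : ℝ} (ht : 0 ≤ t) : f t ≤ C * t := by
  have := (convex_Ici (0 : ℝ)).image_sub_le_mul_sub_of_deriv_le hf.continuous.continuousOn
    hf.differentiableOn (fun s hs => hf' s (interior_subset hs)) 0 Set.self_mem_Ici t ht ht
  simpa [hf0] using this

theorem mul_sub_one_le_of_le_deriv (hf : Differentiable ℝ f) (hf_nonneg : ∀ t, 0 ≤ t → 0 ≤ f t)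
    {a : ℝ} (ha : 0 ≤ a) (hf' : ∀ t, 1 ≤ t → a ≤ deriv f t) {t : ℝ} (ht : 0 ≤ t) :
    a * (t - 1) ≤ f t := by
  rcases le_total t 1 with ht1 | ht1
  · exact (mul_nonpos_of_nonneg_of_nonpos ha (by linarith)).trans (hf_nonneg t ht)
  · have := (convex_Ici (1 : ℝ)).mul_sub_le_image_sub_of_le_deriv hf.continuous.continuousOn
      hf.differentiableOn (fun s hs => hf' s (interior_subset hs)) 1 Set.self_mem_Ici t ht1 ht1
    linarith [hf_nonneg 1 zero_le_one]

theorem mul_two_rpow_neg_le_of_le_deriv (hf : Differentiable ℝ f) (hf0 : f 0 = 0)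
    {c μ : ℝ} (hc : 0 ≤ c) (hμ : 0 ≤ μ)
    (hf' : ∀ t, 0 ≤ t → c * (1 + t) ^ (-μ) ≤ deriv f t) {t : ℝ} (ht : 1 ≤ t) :
    c * 2 ^ (-μ) ≤ f t := by
  have hmono : MonotoneOn f (Set.Ici 0) := by
    refine monotoneOn_of_deriv_nonneg (convex_Ici 0) hf.continuous.continuousOn
      hf.differentiableOn fun s hs => ?_
    have hs0 : 0 ≤ s := interior_subset hs
    exact (mul_nonneg hc (rpow_nonneg (by linarith) _)).trans (hf' s hs0)
  have hf'_ge : ∀ s ∈ interior (Set.Icc (0 : ℝ) 1), c * 2 ^ (-μ) ≤ deriv f s := by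
    intro s hs
    obtain ⟨hs0, hs1⟩ := interior_subset hs
    calc c * 2 ^ (-μ) ≤ c * (1 + s) ^ (-μ) := by
          gcongr c * ?_
          exact rpow_le_rpow_of_nonpos (by linarith) (by linarith) (by linarith)
      _ ≤ deriv f s := hf' s hs0
  have hf1 : c * 2 ^ (-μ) ≤ f 1 := by
    simpa [hf0] using (convex_Icc (0 : ℝ) 1).mul_sub_le_image_sub_of_le_deriv
      hf.continuous.continuousOn hf.differentiableOn hf'_ge 0 (by simp) 1 (by simp) zero_le_one
  exact hf1.trans (hmono (by simp) (by simp; linarith) ht)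

end LinearGrowth

/-- estimate (G17): linear growth of a μ-elliptic density:
c₁·2^{-μ}·(t−1) ≤ h(t) ≤ c₂·t for all t ≥ 0. -/
theorem mu_elliptic_linear_growth
    (h : ℝ → ℝ) (c₁ c₂ μ : ℝ)
    (hc₁ : 0 < c₁) (hc₂ : 0 < c₂) (hμ : 1 < μ)
    (hreg : ContDiff ℝ 2 h)
    (hnonneg : ∀ t, 0 ≤ t → 0 ≤ h t)
    (h0 : h 0 = 0) (h0' : deriv h 0 = 0)
    (hlow : ∀ t, 0 ≤ t → c₁ * (1 + t) ^ (-μ) ≤ deriv (deriv h) t)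
    (hup : ∀ t, 0 ≤ t → deriv h t ≤ c₂ * t / (1 + t)) :
    ∀ t, 0 ≤ t →
      c₁ * (2 : ℝ) ^ (-μ) * (t - 1) ≤ h t ∧ h t ≤ c₂ * t := by
  have hd : Differentiable ℝ h := hreg.differentiable two_ne_zero
  have hd' : Differentiable ℝ (deriv h) := hreg.differentiable_deriv_two
  have hup' : ∀ t, 0 ≤ t → deriv h t ≤ c₂ := fun t ht =>
    (hup t ht).trans (div_le_of_le_mul₀ (by linarith) hc₂.le (by nlinarith))
  intro t ht
  exact ⟨mul_sub_one_le_of_le_deriv hd hnonneg (by positivity)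
      (fun s hs => mul_two_rpow_neg_le_of_le_deriv hd' h0' hc₁.le (by linarith) hlow hs) ht,
    le_mul_of_deriv_le hd h0 hup' ht⟩
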